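/- Let J ⊆ ℝ be a bounded interval and f : J → (0, ∞) a measurable function such that the measure μ with density f is finite. Then the following are equivalent: (1) ∫_J dt/f(t) < ∞; (2) every u with ∫_J u(t)² f(t) dt < ∞ satisfies ∫_J |u(t)| dt < ∞ (i.e. L²_μ(J) ⊆ L¹(J)); (3) there exists a constant C such that ∫_J |u| ≤ C (∫_J u² f)^{1/2} for all u, i.e. L²_μ(J) embeds continuously into L¹(J). -/

import Mathlib

/-!
With `dν = dt / f(t)` on `J` and `w = |u| f` one has `∫_J |u| = ∫ w dν` and `∫_J u² f = ∫ w² dν`,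
so the theorem says that `ν` is finite iff `L²(ν) ⊆ L¹(ν)` iff this inclusion is bounded.
If `ν` is finite, Cauchy–Schwarz gives `∫ w dν ≤ ν(J)^{1/2} (∫ w² dν)^{1/2}`. If `ν` is infinite,
being σ-finite it contains disjoint sets `E_k` with `2^k ≤ ν(E_k) < ∞`, and
`w = ∑ ν(E_k)⁻¹ 1_{E_k}` has `∫ w² dν = ∑ ν(E_k)⁻¹ ≤ 2` but `∫ w dν = ∑ 1 = ∞`.
-/

open MeasureTheory Set Function
open scoped ENNReal NNReal

lemma tsum_indicator_const_apply_of_mem {α ι : Type*} {E : ι → Set α}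
    (hE : Pairwise (Disjoint on E)) (c : ι → ℝ≥0∞) {k : ι} {x : α} (hx : x ∈ E k) :
    ∑' i, (E i).indicator (fun _ => c i) x = c k := by
  rw [tsum_eq_single k fun i hi => indicator_of_notMem ((hE hi).notMem_of_mem_right hx) _,
    indicator_of_mem hx]

lemma apply_tsum_indicator_const {α ι : Type*} {E : ι → Set α} (hE : Pairwise (Disjoint on E))
    (c : ι → ℝ≥0∞) {g : ℝ≥0∞ → ℝ≥0∞} (hg : g 0 = 0) (x : α) :
    g (∑' i, (E i).indicator (fun _ => c i) x) = ∑' i, (E i).indicator (fun _ => g (c i)) x := by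
  by_cases hx : ∃ k, x ∈ E k
  · obtain ⟨k, hk⟩ := hx
    rw [tsum_indicator_const_apply_of_mem hE _ hk, tsum_indicator_const_apply_of_mem hE _ hk]
  · push Not at hx
    simp [indicator_of_notMem (hx _), hg]

section InfiniteMeasure

variable {α : Type*} [MeasurableSpace α] {ν : Measure α}

lemma lintegral_le_rpow_lintegral_sq_mul_rpow_measure_univ {w : α → ℝ≥0∞}
    (hw : AEMeasurable w ν) :
    ∫⁻ x, w x ∂ν ≤ (∫⁻ x, w x ^ 2 ∂ν) ^ (1 / 2 : ℝ) * ν univ ^ (1 / 2 : ℝ) := by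
  simpa using ENNReal.lintegral_mul_le_Lp_mul_Lq ν Real.HolderConjugate.two_two hw
    (aemeasurable_const (b := (1 : ℝ≥0∞)))

lemma exists_measurableSet_disjoint_le_measure_ne_top [SigmaFinite ν] (hν : ν univ = ⊤)
    {T : Set α} (hTm : MeasurableSet T) (hT : ν T ≠ ⊤) {c : ℝ≥0∞} (hc : c ≠ ⊤) :
    ∃ E, MeasurableSet E ∧ Disjoint T E ∧ c ≤ ν E ∧ ν E ≠ ⊤ := by
  have hTc : ν Tᶜ = ⊤ := by
    have := measure_univ_le_add_compl (μ := ν) T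
    rw [hν, top_le_iff, ENNReal.add_eq_top] at this
    exact this.resolve_left hT
  have hmono : Monotone fun m => Tᶜ ∩ spanningSets ν m :=
    fun _ _ h => inter_subset_inter_right _ (monotone_spanningSets ν h)
  rw [← inter_univ Tᶜ, ← iUnion_spanningSets ν, inter_iUnion, hmono.measure_iUnion] at hTc
  obtain ⟨m, hm⟩ := lt_iSup_iff.1 (hTc ▸ hc.lt_top)
  exact ⟨Tᶜ ∩ spanningSets ν m, hTm.compl.inter (measurableSet_spanningSets ν m),
    disjoint_compl_right.mono_right inter_subset_left, hm.le,
    ne_top_of_le_ne_top (measure_spanningSets_lt_top ν m).ne (measure_mono inter_subset_right)⟩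

lemma exists_pairwise_disjoint_two_pow_le_measure [SigmaFinite ν] (hν : ν univ = ⊤) :
    ∃ E : ℕ → Set α, (∀ k, MeasurableSet (E k) ∧ 2 ^ k ≤ ν (E k) ∧ ν (E k) ≠ ⊤) ∧
      Pairwise (Disjoint on E) := by
  obtain ⟨E, hE, hrel⟩ := exists_seq_of_forall_finset_exists
    (fun E : Set α => MeasurableSet E ∧ 1 ≤ ν E ∧ ν E ≠ ⊤)
    (fun E E' => Disjoint E E' ∧ 2 * ν E ≤ ν E') fun s hs => by
      have hsum : ∑ E ∈ s, ν E ≠ ⊤ := ENNReal.sum_ne_top.2 fun E hE => (hs E hE).2.2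
      obtain ⟨E', hE'm, hdisj, hle, hfin⟩ := exists_measurableSet_disjoint_le_measure_ne_top hν
        (s.measurableSet_biUnion fun E hE => (hs E hE).1)
        (ne_top_of_le_ne_top hsum (measure_biUnion_finset_le s id))
        (c := 1 + 2 * ∑ E ∈ s, ν E) (by finiteness)
      refine ⟨E', ⟨hE'm, le_self_add.trans hle, hfin⟩, fun E hE => ⟨?_, ?_⟩⟩
      · exact hdisj.mono_left (subset_biUnion_of_mem (u := id) hE)
      · calc 2 * ν E ≤ 2 * ∑ E ∈ s, ν E := by gcongr; exact Finset.single_le_sum (by simp) hE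
          _ ≤ ν E' := le_add_self.trans hle
  refine ⟨E, fun k => ⟨(hE k).1, ?_, (hE k).2.2⟩, fun m n hmn => ?_⟩
  · induction k with
    | zero => simpa using (hE 0).2.1
    | succ k ih =>
      calc (2 : ℝ≥0∞) ^ (k + 1) = 2 * 2 ^ k := pow_succ' 2 k
        _ ≤ 2 * ν (E k) := by gcongr
        _ ≤ ν (E (k + 1)) := (hrel k (k + 1) k.lt_succ_self).2
  · rcases hmn.lt_or_gt with h | h
    · exact (hrel m n h).1
    · exact (hrel n m h).1.symm

lemma exists_lintegral_sq_ne_top_lintegral_eq_top [SigmaFinite ν] (hν : ν univ = ⊤) :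
    ∃ w : α → ℝ≥0, Measurable w ∧ ∫⁻ x, (w x : ℝ≥0∞) ^ 2 ∂ν ≠ ⊤ ∧ ∫⁻ x, w x ∂ν = ⊤ := by
  obtain ⟨E, hE, hdisj⟩ := exists_pairwise_disjoint_two_pow_le_measure hν
  set W : (ℕ → ℝ≥0∞) → α → ℝ≥0∞ := fun c x => ∑' k, (E k).indicator (fun _ => c k) x
  have hWm : ∀ c, Measurable (W c) := fun c =>
    Measurable.tsum fun k => measurable_const.indicator (hE k).1
  have hint : ∀ c, ∫⁻ x, W c x ∂ν = ∑' k, c k * ν (E k) := fun c => by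
    rw [lintegral_tsum fun k => (measurable_const.indicator (hE k).1).aemeasurable]
    exact tsum_congr fun k => lintegral_indicator_const (hE k).1 _
  set c : ℕ → ℝ≥0∞ := fun k => (ν (E k))⁻¹
  have hc : ∀ k, c k * ν (E k) = 1 := fun k =>
    ENNReal.inv_mul_cancel ((pow_ne_zero k two_ne_zero).bot_lt.trans_le (hE k).2.1).ne' (hE k).2.2
  have hc_le : ∀ k, c k ≤ 2⁻¹ ^ k := fun k => by
    rw [← ENNReal.inv_pow]; exact ENNReal.inv_le_inv.2 (hE k).2.1
  have hW_le : ∀ x, W c x ≤ 1 := fun x => by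
    by_cases hx : ∃ k, x ∈ E k
    · obtain ⟨k, hk⟩ := hx
      exact (tsum_indicator_const_apply_of_mem hdisj c hk).trans_le
        ((hc_le k).trans (pow_le_one₀ zero_le (ENNReal.inv_le_one.2 one_le_two)))
    · push Not at hx
      simp [W, indicator_of_notMem (hx _)]
  refine ⟨fun x => (W c x).toNNReal, (hWm c).ennreal_toNNReal, ?_, ?_⟩
  · simp only [ENNReal.coe_toNNReal (ne_top_of_le_ne_top ENNReal.one_ne_top (hW_le _))]
    have hsq : ∀ x, W c x ^ 2 = W (c ^ 2) x := apply_tsum_indicator_const hdisj c (g := (· ^ 2))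
      (zero_pow two_ne_zero)
    have hterm : ∀ k, (c ^ 2) k * ν (E k) = c k := fun k => by
      rw [Pi.pow_apply, sq, mul_assoc, hc, mul_one]
    simp only [hsq, hint, hterm]
    refine ne_top_of_le_ne_top ?_ (ENNReal.tsum_le_tsum hc_le)
    simp [ENNReal.tsum_geometric]
  · simp only [ENNReal.coe_toNNReal (ne_top_of_le_ne_top ENNReal.one_ne_top (hW_le _))]
    rw [hint, tsum_congr hc]
    exact ENNReal.tsum_const_eq_top_of_ne_zero one_ne_zero

end InfiniteMeasure

section InverseWeight

variable {α : Type*} [MeasurableSpace α] {μ : Measure α} {f : α → ℝ}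

lemma lintegral_withDensity_inv_eq (hfm : Measurable f) (g : α → ℝ≥0∞) :
    ∫⁻ x, g x ∂μ.withDensity (fun x => ENNReal.ofReal (1 / f x)) =
      ∫⁻ x, ENNReal.ofReal (1 / f x) * g x ∂μ :=
  lintegral_withDensity_eq_lintegral_mul_non_measurable μ (hfm.const_div 1).ennreal_ofReal
    (ae_of_all _ fun _ => ENNReal.ofReal_lt_top) g

lemma lintegral_ofReal_abs_eq_lintegral_withDensity_inv (hfm : Measurable f)
    (hf : ∀ᵐ x ∂μ, 0 < f x) (u : α → ℝ) :
    ∫⁻ x, ENNReal.ofReal |u x| ∂μ =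
      ∫⁻ x, ENNReal.ofReal (|u x| * f x) ∂μ.withDensity fun x => ENNReal.ofReal (1 / f x) := by
  rw [lintegral_withDensity_inv_eq hfm]
  refine lintegral_congr_ae (hf.mono fun x (hx : 0 < f x) => ?_)
  dsimp only
  rw [← ENNReal.ofReal_mul (by positivity)]
  field_simp

lemma lintegral_ofReal_sq_mul_eq_lintegral_withDensity_inv (hfm : Measurable f)
    (hf : ∀ᵐ x ∂μ, 0 < f x) (u : α → ℝ) :
    ∫⁻ x, ENNReal.ofReal (u x ^ 2 * f x) ∂μ =
      ∫⁻ x, ENNReal.ofReal (|u x| * f x) ^ 2 ∂μ.withDensity fun x => ENNReal.ofReal (1 / f x) := by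
  rw [lintegral_withDensity_inv_eq hfm]
  refine lintegral_congr_ae (hf.mono fun x (hx : 0 < f x) => ?_)
  dsimp only
  rw [← ENNReal.ofReal_pow (by positivity), ← ENNReal.ofReal_mul (by positivity), mul_pow, sq_abs]
  field_simp

lemma withDensity_inv_apply_univ (f : α → ℝ) :
    μ.withDensity (fun x => ENNReal.ofReal (1 / f x)) univ = ∫⁻ x, ENNReal.ofReal (1 / f x) ∂μ := by
  rw [withDensity_apply _ MeasurableSet.univ, Measure.restrict_univ]

lemma lintegral_ofReal_abs_le_rpow_lintegral_sq_mul_rpow_lintegral_inv (hfm : Measurable f)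
    (hf : ∀ᵐ x ∂μ, 0 < f x) {u : α → ℝ} (hu : Measurable u) :
    ∫⁻ x, ENNReal.ofReal |u x| ∂μ ≤
      (∫⁻ x, ENNReal.ofReal (u x ^ 2 * f x) ∂μ) ^ (1 / 2 : ℝ) *
        (∫⁻ x, ENNReal.ofReal (1 / f x) ∂μ) ^ (1 / 2 : ℝ) := by
  rw [lintegral_ofReal_abs_eq_lintegral_withDensity_inv hfm hf,
    lintegral_ofReal_sq_mul_eq_lintegral_withDensity_inv hfm hf, ← withDensity_inv_apply_univ]
  exact lintegral_le_rpow_lintegral_sq_mul_rpow_measure_univ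
    (hu.abs.mul hfm).ennreal_ofReal.aemeasurable

lemma exists_lintegral_ofReal_sq_mul_ne_top_lintegral_ofReal_abs_eq_top [SigmaFinite μ]
    (hfm : Measurable f) (hf : ∀ᵐ x ∂μ, 0 < f x) (h : ∫⁻ x, ENNReal.ofReal (1 / f x) ∂μ = ⊤) :
    ∃ u : α → ℝ, Measurable u ∧
      ∫⁻ x, ENNReal.ofReal (u x ^ 2 * f x) ∂μ ≠ ⊤ ∧ ∫⁻ x, ENNReal.ofReal |u x| ∂μ = ⊤ := by
  set ν := μ.withDensity fun x => ENNReal.ofReal (1 / f x)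
  have : SigmaFinite ν :=
    SigmaFinite.withDensity_of_ne_top (ae_of_all _ fun _ => ENNReal.ofReal_ne_top)
  obtain ⟨w, hwm, hsq, hint⟩ :=
    exists_lintegral_sq_ne_top_lintegral_eq_top (ν := ν) (by rwa [withDensity_inv_apply_univ])
  have hw : ∀ᵐ x ∂ν, ENNReal.ofReal (|w x / f x| * f x) = w x := by
    filter_upwards [(withDensity_absolutelyContinuous μ _).ae_le hf] with x hx
    rw [abs_div, abs_of_pos hx, div_mul_cancel₀ _ hx.ne', NNReal.abs_eq, ENNReal.ofReal_coe_nnreal]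
  refine ⟨fun x => w x / f x, (measurable_coe_nnreal_real.comp hwm).div hfm, ?_, ?_⟩
  · rwa [lintegral_ofReal_sq_mul_eq_lintegral_withDensity_inv hfm hf,
      lintegral_congr_ae (hw.mono fun x hx => by rw [hx])]
  · rwa [lintegral_ofReal_abs_eq_lintegral_withDensity_inv hfm hf, lintegral_congr_ae hw]

end InverseWeight

theorem weighted_L2_embeds_L1_iff_inv_integrable_general
    (J : Set ℝ) (hJmeas : MeasurableSet J)
    (f : ℝ → ℝ) (hfmeas : Measurable f) (hfpos : ∀ t ∈ J, 0 < f t) :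
    ((∫⁻ t in J, ENNReal.ofReal (1 / f t) ≠ ⊤) ↔
      (∀ u : ℝ → ℝ, Measurable u →
        (∫⁻ t in J, ENNReal.ofReal ((u t) ^ 2 * f t) ≠ ⊤) →
        ∫⁻ t in J, ENNReal.ofReal |u t| ≠ ⊤)) ∧
    ((∫⁻ t in J, ENNReal.ofReal (1 / f t) ≠ ⊤) ↔
      (∃ C : ℝ≥0, ∀ u : ℝ → ℝ, Measurable u →
        ∫⁻ t in J, ENNReal.ofReal |u t| ≤
          C * (∫⁻ t in J, ENNReal.ofReal ((u t) ^ 2 * f t)) ^ (1/2 : ℝ))) := by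
  have hf : ∀ᵐ t ∂volume.restrict J, 0 < f t := ae_restrict_of_forall_mem hJmeas hfpos
  have cauchy_schwarz := fun u (hu : Measurable u) =>
    lintegral_ofReal_abs_le_rpow_lintegral_sq_mul_rpow_lintegral_inv hfmeas hf hu
  refine ⟨⟨fun h u hu hsq => ne_top_of_le_ne_top (by finiteness) (cauchy_schwarz u hu),
      fun h htop => ?_⟩,
    ⟨fun h => ⟨((∫⁻ t in J, ENNReal.ofReal (1 / f t)) ^ (1 / 2 : ℝ)).toNNReal, fun u hu => ?_⟩,
      fun ⟨C, hC⟩ htop => ?_⟩⟩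
  · obtain ⟨u, hu, hsq, habs⟩ :=
      exists_lintegral_ofReal_sq_mul_ne_top_lintegral_ofReal_abs_eq_top hfmeas hf htop
    exact h u hu hsq habs
  · rw [ENNReal.coe_toNNReal (ENNReal.rpow_ne_top_of_nonneg (by norm_num) h), mul_comm]
    exact cauchy_schwarz u hu
  · obtain ⟨u, hu, hsq, habs⟩ :=
      exists_lintegral_ofReal_sq_mul_ne_top_lintegral_ofReal_abs_eq_top hfmeas hf htop
    exact ne_top_of_le_ne_top (by finiteness) (hC u hu) habs

/-- For a positive weight `f` on a bounded interval `J` with `f·𝓛¹` finite, the following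
are equivalent: (1) `1/f ∈ L¹(J)`; (2) every `u` with `∫_J u² f < ∞` satisfies
`∫_J |u| < ∞`; (3) `L²_μ(J)` embeds continuously into `L¹(J)`. -/
theorem weighted_L2_embeds_L1_iff_inv_integrable
    (J : Set ℝ) (hJbdd : Bornology.IsBounded J) (hJinterval : J.OrdConnected)
    (hJmeas : MeasurableSet J)
    (f : ℝ → ℝ) (hfmeas : Measurable f) (hfpos : ∀ t ∈ J, 0 < f t)
    (hfin : ∫⁻ t in J, ENNReal.ofReal (f t) ≠ ⊤) :
    ((∫⁻ t in J, ENNReal.ofReal (1 / f t) ≠ ⊤) ↔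
      (∀ u : ℝ → ℝ, Measurable u →
        (∫⁻ t in J, ENNReal.ofReal ((u t) ^ 2 * f t) ≠ ⊤) →
        ∫⁻ t in J, ENNReal.ofReal |u t| ≠ ⊤)) ∧
    ((∫⁻ t in J, ENNReal.ofReal (1 / f t) ≠ ⊤) ↔
      (∃ C : ℝ≥0, ∀ u : ℝ → ℝ, Measurable u →
        ∫⁻ t in J, ENNReal.ofReal |u t| ≤
          C * (∫⁻ t in J, ENNReal.ofReal ((u t) ^ 2 * f t)) ^ (1/2 : ℝ))) :=
  weighted_L2_embeds_L1_iff_inv_integrable_general J hJmeas f hfmeas hfpos
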